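/- Selection lemma for inf-harmonic functions: let D be a plane domain and u an inf-harmonic function on D. Then there exists a sequence (h_n)_{n≥1} of positive harmonic functions on D such that for every m ≥ 1, u = inf_{n≥m} h_n pointwise on D. -/

import Mathlib

open Complex Metric Set Filter
open scoped ENNReal

/-- A real-valued function is harmonic on `D` if near each point of `D`
it is the real part of a holomorphic function. -/
def HarmonicOnSet (f : ℂ → ℝ) (D : Set ℂ) : Prop :=
  ∀ z ∈ D, ∃ ε > 0, Metric.ball z ε ⊆ D ∧
    ∃ F : ℂ → ℂ, DifferentiableOn ℂ F (Metric.ball z ε) ∧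
      ∀ w ∈ Metric.ball z ε, f w = (F w).re

/-- `u` is inf-harmonic on `D`: the pointwise infimum of a nonempty family of
nonnegative harmonic functions on `D`. -/
def InfHarmonicOn (u : ℂ → ℝ) (D : Set ℂ) : Prop :=
  ∃ H : Set (ℂ → ℝ), H.Nonempty ∧
    (∀ h ∈ H, HarmonicOnSet h D) ∧
    (∀ h ∈ H, ∀ z ∈ D, 0 ≤ h z) ∧
    (∀ z ∈ D, u z = sInf ((fun h => h z) '' H))

/-!
Harnack's inequality, derived from the Poisson formula, says that for every point `z` of `D`
and every `η > 0` there is a neighbourhood of `z` on which the values of any nonnegative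
harmonic function on `D` agree with its value at `z` up to a factor `1 + η`. Let `σ` be a
dense sequence and pick `G i k` in the family within `1 / (k + 1)` of the family's infimum at
`σ i`. For `z` in `D`, choosing `σ i` close to `z` and `k` large makes `G i k z + 1 / (k + 1)`
arbitrarily close to `u z`. Since `k` can be as large as we like, this still works when
finitely many indices are left out, and adding `1 / (k + 1)` makes every function strictly
positive.
-/

open InnerProductSpace Topology

theorem HarmonicOnSet.harmonicOnNhd {f : ℂ → ℝ} {D : Set ℂ} (hf : HarmonicOnSet f D) :
    HarmonicOnNhd f D := by
  intro z hz
  obtain ⟨ε, hε, -, F, hF, hfF⟩ := hf z hz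
  have hball : ball z ε ∈ 𝓝 z := ball_mem_nhds z hε
  refine (harmonicAt_congr_nhds ?_).2 (hF.analyticAt hball).harmonicAt_re
  filter_upwards [hball] with w hw using hfF w hw

theorem HarmonicOnSet.add_const {f : ℂ → ℝ} {D : Set ℂ} (hf : HarmonicOnSet f D) (a : ℝ) :
    HarmonicOnSet (fun z => f z + a) D := by
  intro z hz
  obtain ⟨ε, hε, hsub, F, hF, hfF⟩ := hf z hz
  exact ⟨ε, hε, hsub, fun w => F w + a, hF.add_const _, fun w hw => by simp [hfF w hw]⟩

theorem poissonKernel_mem_Icc {c w z : ℂ} {R : ℝ} (hz : z ∈ sphere c R)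
    (hw : w ∈ ball c R) :
    poissonKernel c w z ∈
      Icc ((R - ‖w - c‖) / (R + ‖w - c‖)) ((R + ‖w - c‖) / (R - ‖w - c‖)) := by
  rw [poissonKernel_eq_re_herglotzRieszKernel, Function.comp_apply, herglotzRieszKernel_def]
  exact ⟨le_re_herglotzRieszKernel hz hw, re_herglotzRieszKernel_le hz hw⟩

theorem HarmonicOnNhd.harnack {f : ℂ → ℝ} {c w : ℂ} {R : ℝ}
    (hf : HarmonicOnNhd f (closedBall c R)) (hf₀ : ∀ z ∈ sphere c R, 0 ≤ f z)
    (hw : w ∈ ball c R) :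
    f c ≤ (R + ‖w - c‖) / (R - ‖w - c‖) * f w ∧
      f w ≤ (R + ‖w - c‖) / (R - ‖w - c‖) * f c := by
  have hR₀ : 0 < R := pos_of_mem_ball hw
  have hR : |R| = R := abs_of_pos hR₀
  have hd : ‖w - c‖ < R := mem_ball_iff_norm.1 hw
  have hK : 0 < (R + ‖w - c‖) / (R - ‖w - c‖) := div_pos (by positivity) (by linarith)
  have hf' : HarmonicOnNhd f (closedBall c |R|) := by rwa [hR]
  have hcont : ContinuousOn f (sphere c |R|) := hf'.continuousOn.mono sphere_subset_closedBall
  have hKf (K : ℝ) : CircleIntegrable (K • f) c R := (hcont.const_smul K).circleIntegrable'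
  have hPf : CircleIntegrable (poissonKernel c w • f) c R := by
    refine (ContinuousOn.smul ?_ hcont).circleIntegrable'
    rw [poissonKernel_eq_re_herglotzRieszKernel]
    exact continuous_re.comp_continuousOn (continuousOn_herglotzRieszKernel_sphere hw)
  have hmean (K : ℝ) : Real.circleAverage (K • f) c R = K * f c := by
    rw [Real.circleAverage_smul, hf'.circleAverage_eq, smul_eq_mul]
  constructor
  · rw [← inv_mul_le_iff₀ hK, inv_div, ← hmean, ← hf.circleAverage_poissonKernel_smul hw]
    refine Real.circleAverage_mono (hKf _) hPf fun z hz => ?_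
    rw [hR] at hz
    exact mul_le_mul_of_nonneg_right (poissonKernel_mem_Icc hz hw).1 (hf₀ z hz)
  · rw [← hmean, ← hf.circleAverage_poissonKernel_smul hw]
    refine Real.circleAverage_mono hPf (hKf _) fun z hz => ?_
    rw [hR] at hz
    exact mul_le_mul_of_nonneg_right (poissonKernel_mem_Icc hz hw).2 (hf₀ z hz)

theorem eventually_harnack_one_add {D : Set ℂ} (hD : IsOpen D) {z : ℂ} (hz : z ∈ D) {η : ℝ}
    (hη : 0 < η) :
    ∀ᶠ s in 𝓝 z, ∀ f : ℂ → ℝ, HarmonicOnNhd f D → (∀ w ∈ D, 0 ≤ f w) →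
      f z ≤ (1 + η) * f s ∧ f s ≤ (1 + η) * f z := by
  obtain ⟨R, hR, hRD⟩ := Metric.nhds_basis_closedBall.mem_iff.1 (hD.mem_nhds hz)
  have hK : ContinuousAt (fun s => (R + ‖s - z‖) / (R - ‖s - z‖)) z :=
    ContinuousAt.div (by fun_prop) (by fun_prop) (by simp [hR.ne'])
  have hK₁ : ∀ᶠ s in 𝓝 z, (R + ‖s - z‖) / (R - ‖s - z‖) < 1 + η :=
    hK.eventually_lt continuousAt_const (by simp [hR.ne', hη])
  filter_upwards [hK₁, ball_mem_nhds z hR] with s hs hsR f hf hf₀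
  obtain ⟨hzs, hsz⟩ := HarmonicOnNhd.harnack (hf.mono hRD)
    (fun w hw => hf₀ w (hRD (sphere_subset_closedBall hw))) hsR
  have hs₀ : 0 ≤ f s := hf₀ s (hRD (ball_subset_closedBall hsR))
  exact ⟨hzs.trans (mul_le_mul_of_nonneg_right hs.le hs₀),
    hsz.trans (mul_le_mul_of_nonneg_right hs.le (hf₀ z hz))⟩

theorem csInf_image_le_mul_csInf_image {α : Type*} {S : Set α} {a b : α → ℝ} {c : ℝ}
    (hS : S.Nonempty) (hc : 0 < c) (ha : BddBelow (a '' S)) (hab : ∀ x ∈ S, a x ≤ c * b x) :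
    sInf (a '' S) ≤ c * sInf (b '' S) := by
  rw [← div_le_iff₀' hc]
  refine le_csInf (hS.image b) ?_
  rintro _ ⟨x, hx, rfl⟩
  rw [div_le_iff₀' hc]
  exact (csInf_le ha ⟨x, hx, rfl⟩).trans (hab x hx)

section Selection

variable {D : Set ℂ} {H : Set (ℂ → ℝ)} {σ : ℕ → ℂ} {G : ℕ → ℕ → ℂ → ℝ}

theorem exists_add_one_div_lt_of_sInf_lt (hD : IsOpen D) (hH : ∀ f ∈ H, HarmonicOnNhd f D)
    (hH₀ : ∀ f ∈ H, ∀ z ∈ D, 0 ≤ f z) (hHne : H.Nonempty) (hσ : DenseRange σ)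
    (hGH : ∀ i k, G i k ∈ H)
    (hG : ∀ i k, G i k (σ i) < sInf ((fun f => f (σ i)) '' H) + 1 / ((k : ℝ) + 1))
    {z : ℂ} (hz : z ∈ D) (m : ℕ) {w : ℝ} (hw : sInf ((fun f => f z) '' H) < w) :
    ∃ i k, m ≤ k ∧ G i k z + 1 / ((k : ℝ) + 1) < w := by
  set v := fun s => sInf ((fun f : ℂ → ℝ => f s) '' H)
  obtain ⟨η, hηw, hη⟩ : ∃ η, (1 + η) * ((1 + η) * v z + η) + η < w ∧ 0 < η := by
    have hcont : ContinuousAt (fun η : ℝ => (1 + η) * ((1 + η) * v z + η) + η) 0 := by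
      fun_prop
    exact (((hcont.eventually_lt continuousAt_const (by simpa using hw)).filter_mono
      nhdsWithin_le_nhds).and self_mem_nhdsWithin).exists (f := 𝓝[>] 0)
  obtain ⟨_, ⟨hsD, hs⟩, i, rfl⟩ := mem_closure_iff_nhds.1 (hσ z) _
    ((hD.eventually_mem hz).and (eventually_harnack_one_add hD hz hη))
  obtain ⟨k₀, hk₀⟩ := exists_nat_one_div_lt hη
  set k := max k₀ m
  have hk : 1 / ((k : ℝ) + 1) < η :=
    (one_div_le_one_div_of_le (by positivity) (by gcongr; exact le_max_left _ _)).trans_lt hk₀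
  have hv : v (σ i) ≤ (1 + η) * v z :=
    csInf_image_le_mul_csInf_image hHne (by linarith)
      ⟨0, by rintro _ ⟨f, hf, rfl⟩; exact hH₀ f hf _ hsD⟩
      fun f hf => (hs f (hH f hf) (hH₀ f hf)).2
  have hGz := (hs _ (hH _ (hGH i k)) (hH₀ _ (hGH i k))).1
  refine ⟨i, k, le_max_right _ _, ?_⟩
  calc G i k z + 1 / ((k : ℝ) + 1) ≤ (1 + η) * G i k (σ i) + η := by linarith
    _ ≤ (1 + η) * (v (σ i) + η) + η := by gcongr; linarith [hG i k]
    _ ≤ (1 + η) * ((1 + η) * v z + η) + η := by gcongr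
    _ < w := hηw

theorem sInf_add_one_div_eq_sInf (hD : IsOpen D) (hH : ∀ f ∈ H, HarmonicOnNhd f D)
    (hH₀ : ∀ f ∈ H, ∀ z ∈ D, 0 ≤ f z) (hHne : H.Nonempty) (hσ : DenseRange σ)
    (hGH : ∀ i k, G i k ∈ H)
    (hG : ∀ i k, G i k (σ i) < sInf ((fun f => f (σ i)) '' H) + 1 / ((k : ℝ) + 1))
    {z : ℂ} (hz : z ∈ D) (m : ℕ) :
    sInf ((fun n => G n.unpair.1 n.unpair.2 z + 1 / ((n.unpair.2 : ℝ) + 1)) '' {n | m ≤ n}) =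
      sInf ((fun f => f z) '' H) := by
  refine csInf_eq_of_forall_ge_of_forall_gt_exists_lt ⟨_, m, le_refl m, rfl⟩ ?_ fun w hw => ?_
  · rintro _ ⟨n, -, rfl⟩
    have hle : sInf ((fun f : ℂ → ℝ => f z) '' H) ≤ G n.unpair.1 n.unpair.2 z :=
      csInf_le ⟨0, by rintro _ ⟨f, hf, rfl⟩; exact hH₀ f hf z hz⟩
        ⟨_, hGH n.unpair.1 n.unpair.2, rfl⟩
    have : (0 : ℝ) < 1 / ((n.unpair.2 : ℝ) + 1) := Nat.one_div_pos_of_nat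
    linarith
  · obtain ⟨i, k, hmk, hlt⟩ :=
      exists_add_one_div_lt_of_sInf_lt hD hH hH₀ hHne hσ hGH hG hz m hw
    exact ⟨_, ⟨Nat.pair i k, hmk.trans (Nat.right_le_pair i k), rfl⟩, by simpa using hlt⟩

end Selection

theorem infHarmonic_selection_general (D : Set ℂ) (hD : IsOpen D)
    (u : ℂ → ℝ) (hu : InfHarmonicOn u D) :
    ∃ h : ℕ → ℂ → ℝ, (∀ n, HarmonicOnSet (h n) D) ∧ (∀ n, ∀ z ∈ D, 0 < h n z) ∧
      ∀ m : ℕ, ∀ z ∈ D, u z = sInf ((fun n => h n z) '' {n : ℕ | m ≤ n}) := by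
  obtain ⟨H, hHne, hH, hH₀, hu⟩ := hu
  obtain ⟨σ, hσ⟩ := TopologicalSpace.exists_dense_seq ℂ
  choose G hGH hG using fun i k : ℕ => Set.exists_mem_image.1 <|
    Real.lt_sInf_add_pos (hHne.image fun f : ℂ → ℝ => f (σ i))
      (Nat.one_div_pos_of_nat (n := k))
  refine ⟨fun n z => G n.unpair.1 n.unpair.2 z + 1 / ((n.unpair.2 : ℝ) + 1),
    fun n => (hH _ (hGH _ _)).add_const _, fun n z hz => ?_, fun m z hz => ?_⟩
  · have := hH₀ _ (hGH n.unpair.1 n.unpair.2) z hz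
    positivity
  · rw [hu z hz, sInf_add_one_div_eq_sInf hD (fun f hf => (hH f hf).harmonicOnNhd) hH₀ hHne hσ
      hGH hG hz m]

theorem infHarmonic_selection (D : Set ℂ) (hD : IsOpen D) (hDc : IsConnected D)
    (u : ℂ → ℝ) (hu : InfHarmonicOn u D) :
    ∃ h : ℕ → ℂ → ℝ, (∀ n, HarmonicOnSet (h n) D) ∧ (∀ n, ∀ z ∈ D, 0 < h n z) ∧
      ∀ m : ℕ, ∀ z ∈ D, u z = sInf ((fun n => h n z) '' {n : ℕ | m ≤ n}) :=
  infHarmonic_selection_general D hD u hu
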